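/- arXiv:math/0702151 — 4 statements merged into one kernel-verified Lean document; each statement's English description precedes it below -/
import Mathlib

section
/- Let P, Q, R be n×n matrices over a field with Q invertible. Then det [[0,P,Q],[-P,0,R],[-Q,-R,0]] = (det Q)² · det(PQ⁻¹R − RQ⁻¹P). -/
/-!
Permuting the first and third block columns (sign `(-1)^n`) brings `Q` to the top-left corner.
The Schur complement of `Q` is `[[-RQ⁻¹P, -P], [-R, -Q]]`, and the Schur complement of `-Q` in it
is `PQ⁻¹R - RQ⁻¹P`; the factor `det (-Q) = (-1)^n det Q` cancels the sign of the permutation.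
-/

/-- The 3×3 block matrix with n×n blocks. -/
def block3 {n : ℕ} {R : Type*} [CommRing R]
    (A B C D E F G H I : Matrix (Fin n) (Fin n) R) :
    Matrix (Fin 3 × Fin n) (Fin 3 × Fin n) R :=
  fun p q => ![![A, B, C], ![D, E, F], ![G, H, I]] p.1 q.1 p.2 q.2

open Matrix

section Block3

variable {n : ℕ} {R : Type*} [CommRing R] (A B C D E F G H I : Matrix (Fin n) (Fin n) R)

def finThreeProdEquiv : Fin 3 × Fin n ≃ Fin n ⊕ (Fin n ⊕ Fin n) where
  toFun
    | (0, i) => .inl i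
    | (1, i) => .inr (.inl i)
    | (2, i) => .inr (.inr i)
  invFun := Sum.elim (fun i => (0, i)) (Sum.elim (fun i => (1, i)) fun i => (2, i))
  left_inv := by rintro ⟨j, i⟩; fin_cases j <;> rfl
  right_inv := by rintro (i | i | i) <;> rfl

theorem block3_eq_submatrix_fromBlocks :
    block3 A B C D E F G H I =
      (fromBlocks A (fromCols B C) (fromRows D G) (fromBlocks E F H I)).submatrix
        finThreeProdEquiv finThreeProdEquiv := by
  ext ⟨j, i⟩ ⟨k, l⟩
  fin_cases j <;> fin_cases k <;> rfl

theorem block3_submatrix_swap_cols :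
    (block3 A B C D E F G H I).submatrix id (Equiv.prodCongrLeft fun _ => Equiv.swap 0 2) =
      block3 C B A F E D I H G := by
  ext ⟨j, i⟩ ⟨k, l⟩
  fin_cases j <;> fin_cases k <;> rfl

theorem det_block3_swap_cols :
    (block3 C B A F E D I H G).det = (-1) ^ n * (block3 A B C D E F G H I).det := by
  rw [← block3_submatrix_swap_cols, det_permute', Equiv.Perm.sign_prodCongrLeft]
  simp [Equiv.Perm.sign_swap (by decide : (0 : Fin 3) ≠ 2)]

theorem det_block3_of_invertible [Invertible A] :
    (block3 A B C D E F G H I).det = A.det *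
      (fromBlocks (E - D * ⅟A * B) (F - D * ⅟A * C) (H - G * ⅟A * B) (I - G * ⅟A * C)).det := by
  rw [block3_eq_submatrix_fromBlocks, det_submatrix_equiv_self, det_fromBlocks₁₁, fromRows_mul,
    fromRows_mul_fromCols]
  congr 2
  ext (i | i) (j | j) <;> rfl

end Block3

/-- det [[0,P,Q],[-P,0,R],[-Q,-R,0]] = (det Q)² · det(PQ⁻¹R − RQ⁻¹P) for Q invertible. -/
theorem det_block3 {n : ℕ} {K : Type*} [Field K]
    (P Q R : Matrix (Fin n) (Fin n) K) (hQ : IsUnit Q.det) :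
    (block3 0 P Q (-P) 0 R (-Q) (-R) 0).det
      = Q.det ^ 2 * (P * Q⁻¹ * R - R * Q⁻¹ * P).det := by
  have := Q.invertibleOfIsUnitDet hQ
  have := invertibleNeg Q
  calc (block3 0 P Q (-P) 0 R (-Q) (-R) 0).det
      = (-1) ^ n * (block3 Q P 0 R 0 (-P) 0 (-R) (-Q)).det := det_block3_swap_cols ..
    _ = (-1) ^ n * (Q.det * (fromBlocks (-(R * Q⁻¹ * P)) (-P) (-R) (-Q)).det) := by
      rw [det_block3_of_invertible]; simp
    _ = (-1) ^ n * (Q.det * ((-Q).det * (P * Q⁻¹ * R - R * Q⁻¹ * P).det)) := by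
      rw [det_fromBlocks₂₂]; simp [neg_add_eq_sub]
    _ = Q.det ^ 2 * (P * Q⁻¹ * R - R * Q⁻¹ * P).det := by
      rw [det_neg, Fintype.card_fin]
      ring_nf
      simp
end

section
/- Let P, Q, R be arbitrary n×n matrices over a commutative ring. Then det [[0,P,Q],[-P,0,R],[-Q,-R,0]] · (det Q)^(n−2) = det(P·adj(Q)·R − R·adj(Q)·P), where adj(Q) is the adjugate of Q and n ≥ 2. -/
/-!
Permuting the block rows and columns simultaneously to the order 1, 0, 2 turns the matrix into
`[[0, (-P | R)], [(P; -R), [[0, Q], [-Q, 0]]]]`. When `Q` is invertible, so is `[[0, Q], [-Q, 0]]`,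
with determinant `det Q ^ 2` and inverse `[[0, -Q⁻¹], [Q⁻¹, 0]]`, and its Schur complement is
`P Q⁻¹ R - R Q⁻¹ P`. Since `adj Q = det Q • Q⁻¹`, the right-hand side is
`det Q ^ n * det (P Q⁻¹ R - R Q⁻¹ P)`, which proves the identity for invertible `Q`.
Both sides are integer polynomials in the entries of `P`, `Q`, `R`, so the general case follows
from the generic matrices over `ℤ[x]`, whose `Q` becomes invertible over the fraction field.
-/

open Matrix

namespace Matrix

section BlockAlgebra

variable {m α : Type*} [Fintype m] [DecidableEq m] [CommRing α]

theorem det_fromBlocks_zero_neg_zero (A : Matrix m m α) :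
    (fromBlocks 0 A (-A) 0).det = A.det ^ 2 := by
  have h : fromBlocks 0 A (-A) 0 * fromBlocks 1 0 1 1
      = fromBlocks 1 1 (-1) 0 * fromBlocks A 0 0 A := by
    simp [fromBlocks_multiply]
  simpa [det_mul, det_fromBlocks_zero₁₂, det_fromBlocks_zero₂₁, sq] using congrArg det h

@[reducible]
def invertibleFromBlocksZeroNegZero (A : Matrix m m α) [Invertible A] :
    Invertible (fromBlocks 0 A (-A) 0) :=
  invertibleOfRightInverse _ (fromBlocks 0 (-⅟A) (⅟A) 0) <| by
    simp [fromBlocks_multiply, ← fromBlocks_one]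

theorem adjugate_eq_det_smul_invOf (A : Matrix m m α) [Invertible A] :
    A.adjugate = A.det • ⅟A := by
  let := detInvertibleOfInvertible A
  rw [invOf_eq, smul_smul, mul_invOf_self, one_smul]

end BlockAlgebra

def finThreeProdEquivMiddleFirst (n : ℕ) : Fin n ⊕ (Fin n ⊕ Fin n) ≃ Fin 3 × Fin n where
  toFun := Sum.elim (fun i => (1, i)) (Sum.elim (fun i => (0, i)) (fun i => (2, i)))
  invFun p := if p.1 = 1 then Sum.inl p.2 else if p.1 = 0 then Sum.inr (Sum.inl p.2)
    else Sum.inr (Sum.inr p.2)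
  left_inv := by rintro (i | i | i) <;> simp
  right_inv := by
    rintro ⟨c, i⟩
    fin_cases c <;> simp

variable {n : ℕ} {S T : Type*} [CommRing S] [CommRing T]

theorem det_block3_eq_det_fromBlocks (A B C D E F G H I : Matrix (Fin n) (Fin n) S) :
    (block3 A B C D E F G H I).det
      = (fromBlocks E (fromCols D F) (fromRows B H) (fromBlocks A C G I)).det := by
  rw [← det_submatrix_equiv_self (finThreeProdEquivMiddleFirst n)]
  congr 1
  ext (i | i | i) (j | j | j) <;> rfl

theorem det_block3_skew_of_invertible (P Q R : Matrix (Fin n) (Fin n) S) [Invertible Q] :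
    (block3 0 P Q (-P) 0 R (-Q) (-R) 0).det = Q.det ^ 2 * (P * ⅟Q * R - R * ⅟Q * P).det := by
  let := invertibleFromBlocksZeroNegZero Q
  have hinv : ⅟(fromBlocks 0 Q (-Q) 0) = fromBlocks 0 (-⅟Q) (⅟Q) 0 := rfl
  rw [det_block3_eq_det_fromBlocks, det_fromBlocks₂₂, det_fromBlocks_zero_neg_zero, hinv,
    fromCols_mul_fromBlocks, fromCols_mul_fromRows]
  congr 2
  simp only [Matrix.mul_neg, Matrix.neg_mul, Matrix.mul_zero, zero_add, add_zero, Matrix.mul_assoc]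
  abel

theorem det_block3_adjugate_of_invertible (hn : 2 ≤ n) (P Q R : Matrix (Fin n) (Fin n) S)
    [Invertible Q] :
    (block3 0 P Q (-P) 0 R (-Q) (-R) 0).det * Q.det ^ (n - 2)
      = (P * Q.adjugate * R - R * Q.adjugate * P).det := by
  have hsmul :
      P * Q.adjugate * R - R * Q.adjugate * P = Q.det • (P * ⅟Q * R - R * ⅟Q * P) := by
    simp only [adjugate_eq_det_smul_invOf, Matrix.mul_smul, Matrix.smul_mul, smul_sub]
  obtain ⟨k, rfl⟩ : ∃ k, n = k + 2 := ⟨n - 2, by omega⟩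
  rw [det_block3_skew_of_invertible, hsmul, det_smul, Fintype.card_fin, Nat.add_sub_cancel]
  ring

theorem mapMatrix_block3 (f : S →+* T) (A B C D E F G H I : Matrix (Fin n) (Fin n) S) :
    f.mapMatrix (block3 A B C D E F G H I)
      = block3 (f.mapMatrix A) (f.mapMatrix B) (f.mapMatrix C) (f.mapMatrix D) (f.mapMatrix E)
          (f.mapMatrix F) (f.mapMatrix G) (f.mapMatrix H) (f.mapMatrix I) := by
  ext ⟨i, a⟩ ⟨j, b⟩
  fin_cases i <;> fin_cases j <;> rfl

theorem map_det_block3_skew_mul_det_pow (f : S →+* T) (P Q R : Matrix (Fin n) (Fin n) S) :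
    f ((block3 0 P Q (-P) 0 R (-Q) (-R) 0).det * Q.det ^ (n - 2))
      = (block3 0 (f.mapMatrix P) (f.mapMatrix Q) (-f.mapMatrix P) 0 (f.mapMatrix R)
          (-f.mapMatrix Q) (-f.mapMatrix R) 0).det * (f.mapMatrix Q).det ^ (n - 2) := by
  rw [map_mul, map_pow, RingHom.map_det, RingHom.map_det, mapMatrix_block3]
  simp only [map_neg, map_zero]

theorem map_det_mul_adjugate_mul_sub (f : S →+* T) (P Q R : Matrix (Fin n) (Fin n) S) :
    f (P * Q.adjugate * R - R * Q.adjugate * P).det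
      = (f.mapMatrix P * (f.mapMatrix Q).adjugate * f.mapMatrix R
          - f.mapMatrix R * (f.mapMatrix Q).adjugate * f.mapMatrix P).det := by
  rw [RingHom.map_det, map_sub, map_mul, map_mul, map_mul, map_mul, RingHom.map_adjugate]

theorem det_block3_adjugate_of_det_ne_zero [IsDomain S] (hn : 2 ≤ n)
    (P Q R : Matrix (Fin n) (Fin n) S) (hQ : Q.det ≠ 0) :
    (block3 0 P Q (-P) 0 R (-Q) (-R) 0).det * Q.det ^ (n - 2)
      = (P * Q.adjugate * R - R * Q.adjugate * P).det := by
  let f := algebraMap S (FractionRing S)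
  have hf : Function.Injective f := IsFractionRing.injective S (FractionRing S)
  have hfQ : IsUnit (f.mapMatrix Q).det := by
    rw [← RingHom.map_det, isUnit_iff_ne_zero]
    exact (map_ne_zero_iff f hf).2 hQ
  let := invertibleOfIsUnitDet _ hfQ
  apply hf
  rw [map_det_block3_skew_mul_det_pow, map_det_mul_adjugate_mul_sub]
  exact det_block3_adjugate_of_invertible hn _ _ _

noncomputable def genericMatrix (n : ℕ) (k : Fin 3) :
    Matrix (Fin n) (Fin n) (MvPolynomial (Fin 3 × Fin n × Fin n) ℤ) :=
  (MvPolynomial.rename (Prod.mk k)).toRingHom.mapMatrix (mvPolynomialX (Fin n) (Fin n) ℤ)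

theorem det_genericMatrix_ne_zero (k : Fin 3) : (genericMatrix n k).det ≠ 0 := by
  rw [genericMatrix, ← RingHom.map_det]
  exact (map_ne_zero_iff _ (MvPolynomial.rename_injective _ (Prod.mk_right_injective k))).2
    (det_mvPolynomialX_ne_zero _ _)

theorem mapMatrix_genericMatrix (M : Fin 3 → Matrix (Fin n) (Fin n) S) (k : Fin 3) :
    (MvPolynomial.eval₂Hom (Int.castRingHom S) fun v => M v.1 v.2.1 v.2.2).mapMatrix
      (genericMatrix n k) = M k := by
  ext i j
  simp [genericMatrix, mvPolynomialX_apply]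

end Matrix

/-- det [[0,P,Q],[-P,0,R],[-Q,-R,0]] · (det Q)^(n−2) = det(P·adj(Q)·R − R·adj(Q)·P)
for arbitrary n×n matrices over a commutative ring, n ≥ 2. -/
theorem det_block3_adjugate {n : ℕ} (hn : 2 ≤ n) {S : Type*} [CommRing S]
    (P Q R : Matrix (Fin n) (Fin n) S) :
    (block3 0 P Q (-P) 0 R (-Q) (-R) 0).det * Q.det ^ (n - 2)
      = (P * Q.adjugate * R - R * Q.adjugate * P).det := by
  have generic := det_block3_adjugate_of_det_ne_zero hn (genericMatrix n 0) (genericMatrix n 1)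
    (genericMatrix n 2) (det_genericMatrix_ne_zero 1)
  have := congrArg (MvPolynomial.eval₂Hom (Int.castRingHom S) fun v => ![P, Q, R] v.1 v.2.1 v.2.2)
    generic
  rwa [map_det_block3_skew_mul_det_pow, map_det_mul_adjugate_mul_sub, mapMatrix_genericMatrix,
    mapMatrix_genericMatrix, mapMatrix_genericMatrix] at this
end

section
/- Let λ₁,…,λₙ, μ₁,…,μₙ be scalars in a field with all μᵢ nonzero, λᵢ ≠ λ_{i+1} for 1 ≤ i ≤ n−1, and λₙ ≠ λ₁. With P = diag(λᵢ), Q = I, and R the cyclic shift matrix weighted by μᵢ (R_{i,i+1} = μᵢ, R_{n,1} = μₙ), the 3n×3n block matrix [[0,P,Q],[-P,0,R],[-Q,-R,0]] has rank 3n (i.e., is invertible). -/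
/-!
A kernel vector `(x, y, z)` of `[[0, P, 1], [-P, 0, R], [-1, -R, 0]]` satisfies `z = -P y` and
`x = -R y` by the first and last block rows, and then the middle row says `(P R - R P) y = 0`.
For `P = diag λ` and `R` the cyclic shift weighted by `μ`, the commutator `P R - R P` is again a
weighted cyclic shift, with weights `(λᵢ - λᵢ₊₁) μᵢ`; these are nonzero, so it is injective.
-/

open Matrix

theorem curry_block3_mulVec {n : ℕ} {R : Type*} [CommRing R]
    (A B C D E F G H I : Matrix (Fin n) (Fin n) R) (v : Fin 3 × Fin n → R) :
    Function.curry (block3 A B C D E F G H I *ᵥ v) =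
      ![A *ᵥ Function.curry v 0 + B *ᵥ Function.curry v 1 + C *ᵥ Function.curry v 2,
        D *ᵥ Function.curry v 0 + E *ᵥ Function.curry v 1 + F *ᵥ Function.curry v 2,
        G *ᵥ Function.curry v 0 + H *ᵥ Function.curry v 1 + I *ᵥ Function.curry v 2] := by
  ext b i
  fin_cases b <;>
    simp only [Function.curry_apply, mulVec, dotProduct, block3, Fintype.sum_prod_type,
      Fin.sum_univ_three] <;> rfl

theorem isUnit_block3_of_injective_commutator {n : ℕ} {K : Type*} [Field K]
    (P R : Matrix (Fin n) (Fin n) K) (h : Function.Injective (P * R - R * P).mulVec) :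
    IsUnit (block3 0 P 1 (-P) 0 R (-1) (-R) 0) := by
  rw [isUnit_iff_isUnit_det, isUnit_iff_ne_zero, Ne, ← exists_mulVec_eq_zero_iff]
  rintro ⟨v, hv0, hv⟩
  have hblocks := (curry_block3_mulVec 0 P 1 (-P) 0 R (-1) (-R) 0 v).symm.trans
    (congrArg Function.curry hv)
  set x := Function.curry v 0
  set y := Function.curry v 1
  set z := Function.curry v 2
  simp only [zero_mulVec, one_mulVec, neg_mulVec, zero_add, add_zero] at hblocks
  have hz : z = -(P *ᵥ y) := eq_neg_of_add_eq_zero_right (congrFun hblocks 0)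
  have hx : x = -(R *ᵥ y) := neg_add_eq_zero.mp (congrFun hblocks 2)
  have hy : y = 0 := by
    refine h ?_
    have hmiddle : -(P *ᵥ x) + R *ᵥ z = 0 := congrFun hblocks 1
    rw [hx, hz, mulVec_neg, mulVec_neg, neg_neg, ← sub_eq_add_neg] at hmiddle
    rwa [mulVec_zero, sub_mulVec, ← mulVec_mulVec, ← mulVec_mulVec]
  have hcurry : Function.curry v = 0 := by
    funext b
    fin_cases b
    exacts [hx.trans (by simp [hy]), hy, hz.trans (by simp [hy])]
  exact hv0 (by rw [← Function.uncurry_curry v, hcurry]; rfl)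

section WeightedShift

variable {n : ℕ} [NeZero n] {R : Type*}

def weightedShift [Zero R] (w : Fin n → R) : Matrix (Fin n) (Fin n) R :=
  of fun i j => if j = i + 1 then w i else 0

theorem weightedShift_mulVec_apply [NonUnitalNonAssocSemiring R] (w v : Fin n → R) (i : Fin n) :
    (weightedShift w *ᵥ v) i = w i * v (i + 1) := by
  simp [weightedShift, mulVec, dotProduct, ite_mul]

theorem diagonal_mul_weightedShift_sub_weightedShift_mul_diagonal [CommRing R]
    (d w : Fin n → R) :
    diagonal d * weightedShift w - weightedShift w * diagonal d =
      weightedShift fun i => (d i - d (i + 1)) * w i := by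
  ext i j
  by_cases hj : j = i + 1
  · simp only [weightedShift, hj, Matrix.sub_apply, diagonal_mul, of_apply, ↓reduceIte, mul_diagonal]
    ring
  · simp [weightedShift, hj]

theorem injective_weightedShift_mulVec [Ring R] [NoZeroDivisors R] {w : Fin n → R}
    (hw : ∀ i, w i ≠ 0) : Function.Injective (weightedShift w).mulVec := by
  intro u v huv
  funext j
  have hj := congrFun huv (j - 1)
  rw [weightedShift_mulVec_apply, weightedShift_mulVec_apply, sub_add_cancel] at hj
  exact mul_left_cancel₀ (hw _) hj

end WeightedShift

/-- With P = diag(λ), Q = 1, R the cyclic shift weighted by μ, and the genericity conditions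
(all μᵢ ≠ 0, λᵢ ≠ λ_{i+1} cyclically), the 3n×3n block matrix
[[0,P,Q],[-P,0,R],[-Q,-R,0]] is invertible, i.e. has rank 3n. -/
theorem block3_generic_invertible {n : ℕ} [NeZero n] {K : Type*} [Field K]
    (lam mu : Fin n → K)
    (hmu : ∀ i, mu i ≠ 0) (hlam : ∀ i, lam i ≠ lam (i + 1))
    (P Q R : Matrix (Fin n) (Fin n) K)
    (hP : P = Matrix.diagonal lam)
    (hQ : Q = 1)
    (hR : R = Matrix.of fun i j => if j = i + 1 then mu i else 0) :
    IsUnit (block3 0 P Q (-P) 0 R (-Q) (-R) 0) := by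
  obtain rfl : R = weightedShift mu := hR
  subst hP hQ
  refine isUnit_block3_of_injective_commutator _ _ ?_
  rw [diagonal_mul_weightedShift_sub_weightedShift_mul_diagonal]
  exact injective_weightedShift_mulVec fun i => mul_ne_zero (sub_ne_zero.mpr (hlam i)) (hmu i)
end

section
/- Let Z ⊂ P² be the set of the C(n+1,2) pairwise intersection points (vertices) of n+1 general lines in the projective plane (a complete (n+1)-gon). Then Z imposes independent conditions on plane curves of degree n; equivalently, the space of degree-n forms vanishing on Z has (projective) dimension n, i.e., h⁰(I_Z(n)) = n+1. -/
open MvPolynomial Module Finset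

/-- The space of polynomials vanishing on a set Z ⊆ K³, as a K-submodule. -/
def vanishSub (K : Type*) [Field K] (Z : Set (Fin 3 → K)) :
    Submodule K (MvPolynomial (Fin 3) K) where
  carrier := {f | ∀ x ∈ Z, MvPolynomial.eval x f = 0}
  add_mem' := by
    intro a b ha hb x hx
    simp [ha x hx, hb x hx]
  zero_mem' := by
    intro x hx
    simp
  smul_mem' := by
    intro c a ha x hx
    simp [ha x hx]

lemma mem_vanishSub {K : Type*} [Field K] {Z : Set (Fin 3 → K)}
    {f : MvPolynomial (Fin 3) K} :
    f ∈ vanishSub K Z ↔ ∀ x ∈ Z, MvPolynomial.eval x f = 0 := Iff.rfl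

section Aux

variable {K : Type*} [Field K]

/-- A linear form on `K³` as a polynomial. -/
noncomputable def lpoly (ℓ : (Fin 3 → K) →ₗ[K] K) : MvPolynomial (Fin 3) K :=
  ∑ i, MvPolynomial.C (ℓ (Pi.single i 1)) * MvPolynomial.X i

lemma eval_lpoly (ℓ : (Fin 3 → K) →ₗ[K] K) (x : Fin 3 → K) :
    MvPolynomial.eval x (lpoly ℓ) = ℓ x := by
  have hx : x = ∑ i, x i • (Pi.single i 1 : Fin 3 → K) := by
    conv_lhs => rw [← Finset.univ_sum_single x]
    refine Finset.sum_congr rfl fun i _ => ?_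
    funext j
    by_cases h : j = i <;> simp [Pi.single_apply, h]
  conv_rhs => rw [hx]
  simp [lpoly, mul_comm]

lemma lpoly_homog (ℓ : (Fin 3 → K) →ₗ[K] K) : (lpoly ℓ).IsHomogeneous 1 := by
  apply MvPolynomial.IsHomogeneous.sum
  intro i _
  exact MvPolynomial.isHomogeneous_C_mul_X _ _

lemma homog_eval_smul {f : MvPolynomial (Fin 3) K} {n : ℕ} (hf : f.IsHomogeneous n)
    (c : K) (x : Fin 3 → K) :
    MvPolynomial.eval (c • x) f = c ^ n * MvPolynomial.eval x f := by
  rw [MvPolynomial.eval_eq, MvPolynomial.eval_eq, Finset.mul_sum]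
  refine Finset.sum_congr rfl fun d hd => ?_
  have hdeg : ∑ i ∈ d.support, d i = n := by
    have h := hf (MvPolynomial.mem_support_iff.mp hd)
    simpa [Finsupp.weight_apply, Finsupp.sum] using h
  have : ∏ i ∈ d.support, (c • x) i ^ d i
      = c ^ n * ∏ i ∈ d.support, x i ^ d i := by
    have : ∀ i ∈ d.support, (c • x) i ^ d i = c ^ d i * x i ^ d i := by
      intro i _
      simp [mul_pow]
    rw [Finset.prod_congr rfl this, Finset.prod_mul_distrib,
      Finset.prod_pow_eq_pow_sum, hdeg]
  rw [this]
  ring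

/-- Evaluation at a family of points, as a linear map from a submodule of polynomials. -/
noncomputable def evalPts {ι : Type*} (pt : ι → (Fin 3 → K))
    (H : Submodule K (MvPolynomial (Fin 3) K)) : ↥H →ₗ[K] (ι → K) where
  toFun f i := MvPolynomial.eval (pt i) f.1
  map_add' f g := by funext i; simp
  map_smul' c f := by funext i; simp [MvPolynomial.smul_eval]

lemma evalPts_apply_mk {ι : Type*} (pt : ι → (Fin 3 → K))
    (H : Submodule K (MvPolynomial (Fin 3) K)) (g : MvPolynomial (Fin 3) K)
    (hg : g ∈ H) (i : ι) :
    evalPts pt H ⟨g, hg⟩ i = MvPolynomial.eval (pt i) g := rfl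

lemma evalPts_apply {ι : Type*} (pt : ι → (Fin 3 → K))
    (H : Submodule K (MvPolynomial (Fin 3) K)) (f : ↥H) (i : ι) :
    evalPts pt H f i = MvPolynomial.eval (pt i) f.1 := rfl

end Aux

/-- The vertices Z of a general complete (n+1)-gon (n+1 lines in P², pairwise distinct and
no three concurrent) impose independent conditions on plane curves of degree n: the space of
degree-n forms vanishing on Z has dimension n+1. -/
theorem vertices_independent_conditions {K : Type*} [Field K] [Infinite K]
    (n : ℕ) (hn : 1 ≤ n)
    (φ : Fin (n + 1) → ((Fin 3 → K) →ₗ[K] K))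
    (hpair : ∀ i j, i ≠ j → LinearIndependent K ![φ i, φ j])
    (hconc : ∀ i j k, i ≠ j → j ≠ k → i ≠ k →
      ¬∃ x : Fin 3 → K, x ≠ 0 ∧ φ i x = 0 ∧ φ j x = 0 ∧ φ k x = 0) :
    Module.finrank K
      ↥(MvPolynomial.homogeneousSubmodule (Fin 3) K n ⊓
        vanishSub K {x | x ≠ 0 ∧ ∃ i j, i ≠ j ∧ φ i x = 0 ∧ φ j x = 0})
      = n + 1 := by
  classical
  set Z : Set (Fin 3 → K) := {x | x ≠ 0 ∧ ∃ i j, i ≠ j ∧ φ i x = 0 ∧ φ j x = 0} with hZ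
  set H : Submodule K (MvPolynomial (Fin 3) K) := MvPolynomial.homogeneousSubmodule (Fin 3) K n
    with hH
  -- Step 1: choice of a point on each vertex, spanning the corresponding line.
  have key : ∀ a b : Fin (n+1), a ≠ b → ∃ p : Fin 3 → K, p ≠ 0 ∧ φ a p = 0 ∧ φ b p = 0 ∧
      ∀ x : Fin 3 → K, φ a x = 0 → φ b x = 0 → ∃ c : K, x = c • p := by
    intro a b hab
    have hW : (LinearMap.ker (φ a) ⊓ LinearMap.ker (φ b) : Submodule K (Fin 3 → K))
        = (Submodule.span K {φ a, φ b}).dualCoannihilator := by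
      ext x
      simp only [Submodule.mem_inf, LinearMap.mem_ker, Submodule.mem_dualCoannihilator]
      constructor
      · rintro ⟨h1, h2⟩ ψ hψ
        obtain ⟨c, d, rfl⟩ := Submodule.mem_span_pair.mp hψ
        simp [h1, h2]
      · intro h
        exact ⟨h _ (Submodule.subset_span (by simp)), h _ (Submodule.subset_span (by simp))⟩
    have hrank2 : finrank K
        ↥(Submodule.span K ({φ a, φ b} : Set (Module.Dual K (Fin 3 → K)))) = 2 := by
      have h := finrank_span_eq_card (hpair a b hab)
      have hr : Set.range ![φ a, φ b] = ({φ a, φ b} : Set (Module.Dual K (Fin 3 → K))) := by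
        ext ψ
        simp [Matrix.range_cons, Matrix.range_empty, or_comm]
      rw [hr] at h
      simpa using h
    have hfr : finrank K
        ↥(LinearMap.ker (φ a) ⊓ LinearMap.ker (φ b) : Submodule K (Fin 3 → K)) = 1 := by
      have h3 := Subspace.finrank_add_finrank_dualCoannihilator_eq
        (Submodule.span K ({φ a, φ b} : Set (Module.Dual K (Fin 3 → K))))
      rw [hrank2] at h3
      have h4 : finrank K (Fin 3 → K) = 3 := by simp
      rw [hW]
      omega
    obtain ⟨v, hv0, hv⟩ := finrank_eq_one_iff'.mp hfr
    obtain ⟨hva, hvb⟩ := Submodule.mem_inf.mp v.2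
    refine ⟨v.1, by simpa using hv0, hva, hvb, ?_⟩
    intro x hx1 hx2
    obtain ⟨c, hc⟩ := hv ⟨x, Submodule.mem_inf.mpr ⟨hx1, hx2⟩⟩
    exact ⟨c, by simpa using congrArg Subtype.val hc.symm⟩
  choose P hP0 hPa hPb hPspan using key
  -- Index type for vertices: pairs (i, j) with i < j, encoded as a sigma type.
  set A : ((j : Fin (n+1)) × Fin j.1) → Fin (n+1) :=
    fun s => ⟨s.2.1, s.2.2.trans s.1.2⟩ with hA
  have hAB : ∀ s : (j : Fin (n+1)) × Fin j.1, A s ≠ s.1 := by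
    intro s
    exact Fin.ne_of_lt s.2.2
  set pt : ((j : Fin (n+1)) × Fin j.1) → (Fin 3 → K) :=
    fun s => P (A s) s.1 (hAB s) with hpt
  -- finite dimensionality of H
  have bH : Basis {d : Fin 3 →₀ ℕ // d.degree = n} K ↥H :=
    (MvPolynomial.basisRestrictSupport K {d : Fin 3 →₀ ℕ | d.degree = n}).map
      (LinearEquiv.ofEq _ _ (MvPolynomial.homogeneousSubmodule_eq_finsupp_supported (Fin 3) K n).symm)
  have eIdx : {d : Fin 3 →₀ ℕ // d.degree = n} ≃ Sym (Fin 3) n :=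
    (Equiv.subtypeEquivRight (q := fun d : Fin 3 →₀ ℕ => d.sum (fun _ => id) = n)
      (fun d => by rw [Finsupp.degree]; rfl)).trans (Sym.equivNatSum (Fin 3) n).symm
  haveI : Fintype {d : Fin 3 →₀ ℕ // d.degree = n} := Fintype.ofEquiv _ eIdx.symm
  haveI : FiniteDimensional K ↥H := Module.Finite.of_basis bH
  have hHdim : finrank K ↥H = (n+2).choose 2 := by
    rw [finrank_eq_card_basis bH, Fintype.card_congr eIdx, Sym.card_sym_eq_choose]
    have h1 : Fintype.card (Fin 3) + n - 1 = n + 2 := by simp; omega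
    rw [h1]
    have := Nat.choose_symm (show n ≤ n + 2 by omega)
    simpa [show n + 2 - n = 2 by omega] using this.symm
  -- the evaluation map
  set E := evalPts pt H with hE
  -- kernel computation
  have hker : LinearMap.ker E = Submodule.comap H.subtype (vanishSub K Z) := by
    ext f
    simp only [LinearMap.mem_ker, Submodule.mem_comap, mem_vanishSub, Submodule.coe_subtype]
    constructor
    · intro h x hx
      obtain ⟨hx0, i, j, hij, hi, hj⟩ := hx
      have hf : (f : MvPolynomial (Fin 3) K).IsHomogeneous n := f.2
      rcases lt_or_gt_of_ne hij with hlt | hlt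
      · obtain ⟨c, hc⟩ := hPspan i j hij x hi hj
        have h0 : MvPolynomial.eval (P i j hij) (f : MvPolynomial (Fin 3) K) = 0 := by
          have := congrFun h ⟨j, ⟨i.1, hlt⟩⟩
          simpa [hE, evalPts_apply, hpt] using this
        rw [hc, homog_eval_smul hf, h0, mul_zero]
      · obtain ⟨c, hc⟩ := hPspan j i hij.symm x hj hi
        have h0 : MvPolynomial.eval (P j i hij.symm) (f : MvPolynomial (Fin 3) K) = 0 := by
          have := congrFun h ⟨i, ⟨j.1, hlt⟩⟩
          simpa [hE, evalPts_apply, hpt] using this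
        rw [hc, homog_eval_smul hf, h0, mul_zero]
    · intro h
      funext s
      refine h (pt s) ⟨hP0 _ _ _, A s, s.1, hAB s, hPa _ _ _, hPb _ _ _⟩
  -- surjectivity
  have hsingle : ∀ s : ((j : Fin (n+1)) × Fin j.1),
      Pi.single s (1:K) ∈ LinearMap.range E := by
    intro s
    set a := A s with ha
    set b := s.1 with hb
    set p := pt s with hp
    obtain ⟨m, hm⟩ : ∃ m, p m ≠ 0 := by
      by_contra hcon
      push_neg at hcon
      exact hP0 _ _ (hAB s) (funext hcon)
    set T : Finset (Fin (n+1)) := (Finset.univ.erase a).erase b with hT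
    have hTcard : T.card = n - 1 := by
      rw [hT, Finset.card_erase_of_mem, Finset.card_erase_of_mem (Finset.mem_univ a)]
      · simp
      · exact Finset.mem_erase.mpr ⟨(hAB s).symm, Finset.mem_univ b⟩
    set G : MvPolynomial (Fin 3) K := (∏ i ∈ T, lpoly (φ i)) * MvPolynomial.X m with hG
    have hGhom : G.IsHomogeneous n := by
      have h1 := MvPolynomial.IsHomogeneous.prod T (fun i => lpoly (φ i)) (fun _ => 1)
        (fun i _ => lpoly_homog _)
      have h2 := h1.mul (MvPolynomial.isHomogeneous_X K m)
      have h3 : (∑ _i ∈ T, 1) + 1 = n := by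
        rw [Finset.sum_const, smul_eq_mul, mul_one, hTcard]
        omega
      rwa [h3] at h2
    have hGa : φ a p = 0 := hPa _ _ _
    have hGb : φ b p = 0 := hPb _ _ _
    have hp0 : p ≠ 0 := hP0 _ _ _
    have hval : MvPolynomial.eval p G ≠ 0 := by
      rw [hG, map_mul, MvPolynomial.eval_X, map_prod]
      refine mul_ne_zero (Finset.prod_ne_zero_iff.mpr ?_) hm
      intro i hi
      rw [eval_lpoly]
      obtain ⟨hib, hia, -⟩ : i ≠ b ∧ i ≠ a ∧ True := by
        obtain ⟨h1, h2⟩ := Finset.mem_erase.mp hi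
        obtain ⟨h3, -⟩ := Finset.mem_erase.mp h2
        exact ⟨h1, h3, trivial⟩
      intro hival
      exact hconc i a b hia (hAB s) hib ⟨p, hp0, hival, hGa, hGb⟩
    refine ⟨⟨(MvPolynomial.eval p G)⁻¹ • G, H.smul_mem _ hGhom⟩, ?_⟩
    funext t
    rw [hE, evalPts_apply_mk, MvPolynomial.smul_eval]
    by_cases hts : t = s
    · subst hts
      rw [Pi.single_eq_same, ← hp, inv_mul_cancel₀ hval]
    · rw [Pi.single_eq_of_ne hts]
      have hvan : MvPolynomial.eval (pt t) G = 0 := by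
        rw [hG, map_mul, map_prod]
        have hpt_a : φ (A t) (pt t) = 0 := hPa _ _ _
        have hpt_b : φ t.1 (pt t) = 0 := hPb _ _ _
        have hexist : ∃ i ∈ T, φ i (pt t) = 0 := by
          by_cases h1 : A t ∈ T
          · exact ⟨A t, h1, hpt_a⟩
          · by_cases h2 : t.1 ∈ T
            · exact ⟨t.1, h2, hpt_b⟩
            · exfalso
              apply hts
              -- A t, t.1 ∈ {a, b}; with A t < t.1 and a < b conclude t = s
              have hmem : ∀ u : Fin (n+1), u ∉ T → u = a ∨ u = b := by
                intro u hu
                rw [hT] at hu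
                simp only [Finset.mem_erase, Finset.mem_univ, and_true, not_and] at hu
                by_cases hub : u = b
                · exact Or.inr hub
                · exact Or.inl (not_not.mp (hu hub))
              have hAlt : (A t).1 < t.1.1 := t.2.2
              have halt : a.1 < b.1 := s.2.2
              rcases hmem _ h1 with hA1 | hA1 <;> rcases hmem _ h2 with hB1 | hB1
              · exfalso; rw [hA1, hB1] at hAlt; omega
              · -- A t = a, t.1 = b : conclude t = s
                obtain ⟨j, i⟩ := t
                obtain ⟨j', i'⟩ := s
                have hj : j = j' := hB1
                subst hj
                have : i = i' := by
                  apply Fin.ext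
                  have : (A ⟨j, i⟩).1 = (A ⟨j, i'⟩).1 := by rw [hA1]
                  simpa [hA] using this
                rw [this]
              · exfalso
                rw [hA1, hB1] at hAlt
                omega
              · exfalso
                rw [hA1, hB1] at hAlt
                omega
        obtain ⟨i, hiT, hival⟩ := hexist
        rw [Finset.prod_eq_zero hiT (by rw [eval_lpoly]; exact hival), zero_mul]
      rw [hvan, mul_zero]
  have hrange : LinearMap.range E = ⊤ := by
    rw [eq_top_iff, ← (Pi.basisFun K ((j : Fin (n+1)) × Fin j.1)).span_eq]
    refine Submodule.span_le.mpr ?_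
    rintro _ ⟨t, rfl⟩
    rw [Pi.basisFun_apply]
    exact hsingle t
  -- rank-nullity
  have hrn := LinearMap.finrank_range_add_finrank_ker E
  rw [hrange, hker] at hrn
  have hkerdim : finrank K ↥(Submodule.comap H.subtype (vanishSub K Z))
      = finrank K ↥(H ⊓ vanishSub K Z) := by
    refine LinearEquiv.finrank_eq ?_
    exact (Submodule.equivSubtypeMap H _).trans
      (LinearEquiv.ofEq _ _ (Submodule.map_comap_subtype H _))
  have htop : finrank K ↥(⊤ : Submodule K (((j : Fin (n+1)) × Fin j.1) → K))
      = Fintype.card ((j : Fin (n+1)) × Fin j.1) := by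
    rw [finrank_top, finrank_pi]
  have hcard : Fintype.card ((j : Fin (n+1)) × Fin j.1) = (n+1).choose 2 := by
    rw [Fintype.card_sigma]
    have h1 : ∀ j : Fin (n+1), Fintype.card (Fin j.1) = j.1 := fun j => Fintype.card_fin _
    rw [Finset.sum_congr rfl (fun j _ => h1 j)]
    rw [Fin.sum_univ_eq_sum_range (fun i => i) (n+1)]
    have h2 := Finset.sum_range_id_mul_two (n+1)
    rw [Nat.choose_two_right]
    omega
  have hpascal : (n+2).choose 2 = (n+1) + (n+1).choose 2 := by
    have := Nat.choose_succ_succ (n+1) 1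
    simpa [Nat.choose_one_right] using this
  rw [htop, hcard, hkerdim, hHdim, hpascal] at hrn
  omega
end
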